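/- arXiv:1506.08459 — 4 statements merged into one kernel-verified Lean document; each statement's English description precedes it below -/
import Mathlib

section
/- Suppose in the quadratic program min (1/2)X̂ᵀX̂ − q̂ᵀX̂ subject to ÂᵀX̂ = b̂, the demand compatibility holds: q̂ = D̂Y for some Y and Â = ĈA_c for some A_c. Then Îq̂ = q̂ and ÎÂ = Â, where Î = ÛD̂(ÛD̂)⁺ + ĈĈ⁺, and consequently the variational-subspace reduced solution equals the exact solution. -/
/-!
With `Û = 1 - ĈĈ⁺` one has `ÛĈ = 0`, so `(ÛD̂)⁺Ĉ = 0` and `ÎĈ = ĈĈ⁺Ĉ = Ĉ`; and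
`(ÛD̂)⁺D̂ = (D̂ᵀÛD̂)⁻¹D̂ᵀÛD̂ = 1`, so `ÎD̂ = ÛD̂ + ĈĈ⁺D̂ = D̂`. Both inverses exist because `[Ĉ D̂]`
has full column rank, which makes `Ĉ` and `ÛD̂` injective. Demand compatibility puts `q̂` and the
columns of `Â` in the column spaces of `D̂` and `Ĉ`, so `Î` fixes them; then `Â_p = Â` and the
reduced formula collapses to the exact one.
-/

open Matrix

namespace Matrix

theorem mulVec_injective_of_rank_eq_card {K m n : Type*} [Field K] [Fintype n]
    {M : Matrix m n K} (h : M.rank = Fintype.card n) : Function.Injective M.mulVec := by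
  rw [mulVec_injective_iff, linearIndependent_iff_card_eq_finrank_span, Set.finrank,
    ← rank_eq_finrank_span_cols, h]

section Field

variable {K : Type*} [Field K] {n d k : Type*} [Fintype d] [Fintype k]

theorem mulVec_injective_left_of_fromCols {C : Matrix n d K} {D : Matrix n k K}
    (h : Function.Injective (fromCols C D).mulVec) : Function.Injective C.mulVec := by
  intro x y hxy
  have hxy0 := @h (Sum.elim x 0) (Sum.elim y 0) (by simp only [fromCols_mulVec_sumElim, hxy])
  exact funext fun i => congrFun hxy0 (Sum.inl i)

variable [Fintype n]

theorem mulVec_injective_one_sub_mul_mul_of_fromCols [DecidableEq n] {C : Matrix n d K}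
    {D : Matrix n k K} (h : Function.Injective (fromCols C D).mulVec) (P : Matrix d n K) :
    Function.Injective ((1 - C * P) * D).mulVec := by
  rw [← coe_mulVecLin, ← LinearMap.ker_eq_bot, LinearMap.ker_eq_bot']
  intro y hy
  have hDy : C *ᵥ -(P *ᵥ D *ᵥ y) + D *ᵥ y = 0 := by
    rw [mulVecLin_apply, ← mulVec_mulVec, sub_mulVec, one_mulVec, sub_eq_zero] at hy
    rw [mulVec_neg, mulVec_mulVec, ← hy, neg_add_cancel]
  rw [← fromCols_mulVec_sumElim, ← mulVec_zero (fromCols C D), h.eq_iff] at hDy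
  exact funext fun j => congrFun hDy (Sum.inr j)

variable [DecidableEq d]

/-- The Moore–Penrose pseudoinverse `B⁺` when `B` has full column rank; junk otherwise, since the
inverse of a singular matrix is `0`. -/
noncomputable def leftPinv (B : Matrix n d K) : Matrix d n K := (Bᵀ * B)⁻¹ * Bᵀ

theorem transpose_mul_leftPinv (B : Matrix n d K) : (B * leftPinv B)ᵀ = B * leftPinv B := by
  rw [leftPinv, transpose_mul, transpose_mul, transpose_transpose, transpose_nonsing_inv,
    transpose_mul, transpose_transpose, Matrix.mul_assoc]

variable [DecidableEq n]

theorem transpose_one_sub_mul_leftPinv (C : Matrix n d K) :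
    (1 - C * leftPinv C)ᵀ = 1 - C * leftPinv C := by
  rw [transpose_sub, transpose_one, transpose_mul_leftPinv]

/-- The paper's `Î = ÛD̂(ÛD̂)⁺ + ĈĈ⁺` with `Û = 1 - ĈĈ⁺`, using `(ÛD̂)ᵀÛD̂ = D̂ᵀÛD̂`. -/
noncomputable def variationalProj [DecidableEq k] (C : Matrix n d K) (D : Matrix n k K) :
    Matrix n n K :=
  let U := 1 - C * leftPinv C
  U * D * ((Dᵀ * U * D)⁻¹ * Dᵀ * Uᵀ) + C * leftPinv C

/-- `X̂_min`, the minimiser of `½xᵀx - qᵀx` subject to `Aᵀx = b` when `A` has full column rank. -/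
noncomputable def exactSolution {m : Type*} [Fintype m] [DecidableEq m] (A : Matrix n m K)
    (q : n → K) (b : m → K) : n → K :=
  (1 - A * leftPinv A) *ᵥ q + (leftPinv A)ᵀ *ᵥ b

/-- `X̂*_min`, the same formula in the variational subspace cut out by the projector `I`. -/
noncomputable def reducedSolution {m : Type*} [Fintype m] [DecidableEq m] (I : Matrix n n K)
    (A : Matrix n m K) (q : n → K) (b : m → K) : n → K :=
  (I - I * A * leftPinv (I * A)) *ᵥ q + (leftPinv (I * A))ᵀ *ᵥ b

theorem reducedSolution_eq_exactSolution {m : Type*} [Fintype m] [DecidableEq m]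
    {I : Matrix n n K} {A : Matrix n m K} {q : n → K} (b : m → K) (hq : I *ᵥ q = q)
    (hA : I * A = A) : reducedSolution I A q b = exactSolution A q b := by
  rw [reducedSolution, exactSolution, hA, sub_mulVec, sub_mulVec, hq, one_mulVec]

end Field

section OrderedField

variable {K : Type*} [Field K] [LinearOrder K] [IsStrictOrderedRing K]
variable {n d k : Type*} [Fintype n] [Fintype d] [Fintype k] [DecidableEq d]

theorem isUnit_transpose_mul_self_of_injective {B : Matrix n d K}
    (hB : Function.Injective B.mulVec) : IsUnit (Bᵀ * B) := by
  rw [← mulVec_injective_iff_isUnit, ← coe_mulVecLin, ← LinearMap.ker_eq_bot,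
    ker_mulVecLin_transpose_mul_self, LinearMap.ker_eq_bot, coe_mulVecLin]
  exact hB

theorem leftPinv_mul_self {B : Matrix n d K} (hB : Function.Injective B.mulVec) :
    leftPinv B * B = 1 := by
  rw [leftPinv, Matrix.mul_assoc,
    nonsing_inv_mul _ ((isUnit_iff_isUnit_det _).1 (isUnit_transpose_mul_self_of_injective hB))]

variable [DecidableEq n]

theorem one_sub_mul_leftPinv_mul_self {C : Matrix n d K} (hC : Function.Injective C.mulVec) :
    (1 - C * leftPinv C) * C = 0 := by
  rw [Matrix.sub_mul, Matrix.one_mul, Matrix.mul_assoc, leftPinv_mul_self hC, Matrix.mul_one,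
    sub_self]

theorem one_sub_mul_leftPinv_mul_one_sub_mul_leftPinv {C : Matrix n d K} (hC : Function.Injective C.mulVec) :
    (1 - C * leftPinv C) * (1 - C * leftPinv C) = 1 - C * leftPinv C := by
  rw [Matrix.mul_sub, Matrix.mul_one, ← Matrix.mul_assoc, one_sub_mul_leftPinv_mul_self hC,
    Matrix.zero_mul, sub_zero]



variable {C : Matrix n d K} {D : Matrix n k K} [DecidableEq k]

theorem variationalProj_mul_left (h : Function.Injective (fromCols C D).mulVec) :
    variationalProj C D * C = C := by
  have hC := mulVec_injective_left_of_fromCols h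
  have hUC := one_sub_mul_leftPinv_mul_self hC
  rw [variationalProj, transpose_one_sub_mul_leftPinv, Matrix.add_mul, Matrix.mul_assoc _ _ C,
    Matrix.mul_assoc _ _ C, hUC, Matrix.mul_zero, Matrix.mul_zero, zero_add, Matrix.mul_assoc,
    leftPinv_mul_self hC, Matrix.mul_one]

theorem variationalProj_mul_right (h : Function.Injective (fromCols C D).mulVec) :
    variationalProj C D * D = D := by
  have hC := mulVec_injective_left_of_fromCols h
  set U := 1 - C * leftPinv C with hU
  have hgram : (U * D)ᵀ * (U * D) = Dᵀ * U * D := by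
    rw [transpose_mul, transpose_one_sub_mul_leftPinv, Matrix.mul_assoc, ← Matrix.mul_assoc U,
      one_sub_mul_leftPinv_mul_one_sub_mul_leftPinv hC, Matrix.mul_assoc]
  have hUD : IsUnit (Dᵀ * U * D).det := by
    rw [← hgram, ← isUnit_iff_isUnit_det]
    exact isUnit_transpose_mul_self_of_injective
      (mulVec_injective_one_sub_mul_mul_of_fromCols h _)
  have hUDp : (Dᵀ * U * D)⁻¹ * Dᵀ * Uᵀ * D = 1 := by
    rw [transpose_one_sub_mul_leftPinv, Matrix.mul_assoc _ U, Matrix.mul_assoc,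
      ← Matrix.mul_assoc Dᵀ, nonsing_inv_mul _ hUD]
  calc variationalProj C D * D = U * D + C * leftPinv C * D := by
        rw [variationalProj, Matrix.add_mul, Matrix.mul_assoc (U * D), hUDp, Matrix.mul_one]
    _ = D := by rw [← Matrix.add_mul, hU, sub_add_cancel, Matrix.one_mul]

end OrderedField

end Matrix

theorem demand_compatibility_exactness_general
    (n d k m : ℕ) (C : Matrix (Fin n) (Fin d) ℝ) (D : Matrix (Fin n) (Fin k) ℝ)
    (A : Matrix (Fin n) (Fin m) ℝ)
    (q : Fin n → ℝ) (b : Fin m → ℝ)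
    (hrank : (Matrix.fromCols C D).rank = d + k)
    (Y : Fin k → ℝ) (Ac : Matrix (Fin d) (Fin m) ℝ)
    (hq : q = D *ᵥ Y) (hA : A = C * Ac) :
    let Cp : Matrix (Fin d) (Fin n) ℝ := (Cᵀ * C)⁻¹ * Cᵀ
    let U : Matrix (Fin n) (Fin n) ℝ := 1 - C * Cp
    let UDp : Matrix (Fin k) (Fin n) ℝ := (Dᵀ * U * D)⁻¹ * Dᵀ * Uᵀ
    let Ihat : Matrix (Fin n) (Fin n) ℝ := U * D * UDp + C * Cp
    let Ap : Matrix (Fin m) (Fin n) ℝ := (Aᵀ * A)⁻¹ * Aᵀ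
    let App : Matrix (Fin n) (Fin m) ℝ := Ihat * A
    let Appp : Matrix (Fin m) (Fin n) ℝ := (Appᵀ * App)⁻¹ * Appᵀ
    IsUnit (Aᵀ * Ihat * A) →
      Ihat *ᵥ q = q ∧ Ihat * A = A ∧
        (Ihat - App * Appp) *ᵥ q + Apppᵀ *ᵥ b
          = (1 - A * Ap) *ᵥ q + Apᵀ *ᵥ b := by
  intro Cp U UDp Ihat Ap App Appp _
  have hCD : Function.Injective (fromCols C D).mulVec :=
    mulVec_injective_of_rank_eq_card (by simpa using hrank)
  have hIq : variationalProj C D *ᵥ q = q := by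
    rw [hq, mulVec_mulVec, variationalProj_mul_right hCD]
  have hIA : variationalProj C D * A = A := by
    rw [hA, ← Matrix.mul_assoc, variationalProj_mul_left hCD]
  exact ⟨hIq, hIA, reducedSolution_eq_exactSolution b hIq hIA⟩

/-- Demand compatibility. If `q̂ = D̂Y` and `Â = ĈA_c`, then
`Îq̂ = q̂` and `ÎÂ = Â`, and the variational-subspace reduced solution equals
the exact solution. -/
theorem demand_compatibility_exactness
    (n d k m : ℕ) (C : Matrix (Fin n) (Fin d) ℝ) (D : Matrix (Fin n) (Fin k) ℝ)
    (A : Matrix (Fin n) (Fin m) ℝ)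
    (q : Fin n → ℝ) (b : Fin m → ℝ)
    (hrank : (Matrix.fromCols C D).rank = d + k)
    (hArank : A.rank = m)
    (Y : Fin k → ℝ) (Ac : Matrix (Fin d) (Fin m) ℝ)
    (hq : q = D *ᵥ Y) (hA : A = C * Ac) :
    let Cp : Matrix (Fin d) (Fin n) ℝ := (Cᵀ * C)⁻¹ * Cᵀ
    let U : Matrix (Fin n) (Fin n) ℝ := 1 - C * Cp
    let UDp : Matrix (Fin k) (Fin n) ℝ := (Dᵀ * U * D)⁻¹ * Dᵀ * Uᵀ
    let Ihat : Matrix (Fin n) (Fin n) ℝ := U * D * UDp + C * Cp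
    let Ap : Matrix (Fin m) (Fin n) ℝ := (Aᵀ * A)⁻¹ * Aᵀ
    let App : Matrix (Fin n) (Fin m) ℝ := Ihat * A
    let Appp : Matrix (Fin m) (Fin n) ℝ := (Appᵀ * App)⁻¹ * Appᵀ
    IsUnit (Aᵀ * Ihat * A) →
      Ihat *ᵥ q = q ∧ Ihat * A = A ∧
        (Ihat - App * Appp) *ᵥ q + Apppᵀ *ᵥ b
          = (1 - A * Ap) *ᵥ q + Apᵀ *ᵥ b :=
  demand_compatibility_exactness_general n d k m C D A q b hrank Y Ac hq hA
end

section
/- Let Â be an n×m full-column-rank matrix, Î a symmetric idempotent n×n matrix with ÂᵀÎÂ invertible, and Â_p = ÎÂ. If ‖I − Â⁺ÎÂ‖₂ < 1, then ‖Â[(ÂᵀÂ)⁻¹ − (Â_pᵀÂ_p)⁻¹]Âᵀ‖₂ ≤ cond(Â)·‖I − Â⁺ÎÂ‖₂ / (1 − ‖I − Â⁺ÎÂ‖₂), where cond(Â) = ‖Â‖₂‖Â⁺‖₂ and Â⁺ = (ÂᵀÂ)⁻¹Âᵀ. -/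
open Matrix
open scoped Matrix.Norms.L2Operator

/-! Put `B = ÂᵀÂ` and `P = Â⁺ÎÂ = B⁻¹(ÂᵀÎÂ)`. Since `Î` is a symmetric idempotent, the Gram
matrix of `Â_p = ÎÂ` is `ÂᵀÎÂ = BP`, so `Â(B⁻¹ - (BP)⁻¹)Âᵀ = Â(I - P⁻¹)Â⁺`. Writing `P = I - T`
with `‖T‖ < 1`, the Neumann series gives `‖P⁻¹‖ ≤ 1/(1 - ‖T‖)`, and `I - P⁻¹ = -P⁻¹T` then has
norm at most `‖T‖/(1 - ‖T‖)`. -/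

theorem norm_one_sub_ringInverse_le {R : Type*} [NormedRing R] [HasSummableGeomSeries R]
    (h1 : ‖(1 : R)‖ ≤ 1) {p : R} (hp : ‖1 - p‖ < 1) :
    ‖1 - Ring.inverse p‖ ≤ ‖1 - p‖ / (1 - ‖1 - p‖) := by
  have hunit : IsUnit p := by simpa using isUnit_one_sub_of_norm_lt_one hp
  have hinv : ‖Ring.inverse p‖ ≤ (1 - ‖1 - p‖)⁻¹ := by
    have := tsum_geometric_le_of_norm_lt_one (1 - p) hp
    rw [geom_series_eq_inverse _ hp, sub_sub_cancel] at this
    linarith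
  have hfactor : 1 - Ring.inverse p = -(Ring.inverse p * (1 - p)) := by
    rw [mul_sub, mul_one, Ring.inverse_mul_cancel p hunit, neg_sub]
  calc ‖1 - Ring.inverse p‖ ≤ ‖Ring.inverse p‖ * ‖1 - p‖ := by
        rw [hfactor, norm_neg]; exact norm_mul_le _ _
    _ ≤ (1 - ‖1 - p‖)⁻¹ * ‖1 - p‖ := by gcongr
    _ = ‖1 - p‖ / (1 - ‖1 - p‖) := by ring

namespace Matrix

variable {m n : Type*}

theorem isUnit_of_rank_eq_card [Fintype n] [DecidableEq n] {K : Type*} [Field K]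
    {B : Matrix n n K} (h : B.rank = Fintype.card n) : IsUnit B := by
  rw [← mulVec_surjective_iff_isUnit, ← Matrix.coe_mulVecLin, ← LinearMap.range_eq_top]
  apply Submodule.eq_top_of_finrank_eq
  simpa [rank] using h

theorem isUnit_transpose_mul_self_of_rank_eq_card [Fintype m] [Fintype n] [DecidableEq n]
    {K : Type*} [Field K] [LinearOrder K] [IsStrictOrderedRing K]
    {A : Matrix m n K} (h : A.rank = Fintype.card n) : IsUnit (Aᵀ * A) :=
  isUnit_of_rank_eq_card (by rw [rank_transpose_mul_self, h])

theorem transpose_mul_mul_self_of_isIdempotentElem [Fintype m] {R : Type*} [CommSemiring R]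
    {P : Matrix m m R} (hsym : Pᵀ = P) (hidem : IsIdempotentElem P) (A : Matrix m n R) :
    (P * A)ᵀ * (P * A) = Aᵀ * P * A := by
  rw [transpose_mul, hsym, Matrix.mul_assoc, ← Matrix.mul_assoc P, hidem.eq, Matrix.mul_assoc]

theorem inv_sub_inv_eq_of_isUnit_left [Fintype n] [DecidableEq n] {R : Type*} [CommRing R]
    {B : Matrix n n R} (hB : IsUnit B) (C : Matrix n n R) :
    B⁻¹ - C⁻¹ = (1 - (B⁻¹ * C)⁻¹) * B⁻¹ := by
  rw [mul_inv_rev, nonsing_inv_nonsing_inv _ ((isUnit_iff_isUnit_det B).mp hB), Matrix.sub_mul,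
    Matrix.one_mul, Matrix.mul_assoc, mul_nonsing_inv _ ((isUnit_iff_isUnit_det B).mp hB),
    Matrix.mul_one]

theorem l2_opNorm_one_le [Fintype n] [DecidableEq n] {𝕜 : Type*} [RCLike 𝕜] :
    ‖(1 : Matrix n n 𝕜)‖ ≤ 1 := by
  rw [cstar_norm_def, _root_.map_one]
  exact ContinuousLinearMap.norm_id_le

theorem l2_opNorm_mul_mul_le {l o : Type*} [Fintype l] [Fintype m] [Fintype n] [Fintype o]
    [DecidableEq m] [DecidableEq n] [DecidableEq o] {𝕜 : Type*} [RCLike 𝕜]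
    (A : Matrix l m 𝕜) (B : Matrix m n 𝕜) (C : Matrix n o 𝕜) :
    ‖A * B * C‖ ≤ ‖A‖ * ‖B‖ * ‖C‖ :=
  (l2_opNorm_mul _ _).trans (by gcongr; exact l2_opNorm_mul _ _)

end Matrix

theorem lemma_bound_projected_inverse_difference_general
    (n m : ℕ) (A : Matrix (Fin n) (Fin m) ℝ) (Ihat : Matrix (Fin n) (Fin n) ℝ)
    (hArank : A.rank = m) (hsym : Ihatᵀ = Ihat) (hidem : Ihat * Ihat = Ihat) :
    let Ap : Matrix (Fin m) (Fin n) ℝ := (Aᵀ * A)⁻¹ * Aᵀ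
    let App : Matrix (Fin n) (Fin m) ℝ := Ihat * A
    ‖(1 : Matrix (Fin m) (Fin m) ℝ) - Ap * Ihat * A‖ < 1 →
      ‖A * ((Aᵀ * A)⁻¹ - (Appᵀ * App)⁻¹) * Aᵀ‖ ≤
        ‖A‖ * ‖Ap‖ * ‖(1 : Matrix (Fin m) (Fin m) ℝ) - Ap * Ihat * A‖ /
          (1 - ‖(1 : Matrix (Fin m) (Fin m) ℝ) - Ap * Ihat * A‖) := by
  intro Ap App ht
  set P := Ap * Ihat * A
  have hB : IsUnit (Aᵀ * A) := isUnit_transpose_mul_self_of_rank_eq_card (by simpa using hArank)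
  have hdiff : A * ((Aᵀ * A)⁻¹ - (Appᵀ * App)⁻¹) * Aᵀ = A * (1 - P⁻¹) * Ap := by
    rw [transpose_mul_mul_self_of_isIdempotentElem hsym hidem, inv_sub_inv_eq_of_isUnit_left hB]
    simp only [P, Ap, Matrix.mul_assoc]
  calc ‖A * ((Aᵀ * A)⁻¹ - (Appᵀ * App)⁻¹) * Aᵀ‖
      ≤ ‖A‖ * ‖1 - P⁻¹‖ * ‖Ap‖ := hdiff ▸ l2_opNorm_mul_mul_le _ _ _
    _ ≤ ‖A‖ * (‖1 - P‖ / (1 - ‖1 - P‖)) * ‖Ap‖ := by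
        rw [nonsing_inv_eq_ringInverse]
        gcongr
        exact norm_one_sub_ringInverse_le l2_opNorm_one_le ht
    _ = ‖A‖ * ‖Ap‖ * ‖1 - P‖ / (1 - ‖1 - P‖) := by ring

/-- Spectral-norm bound
`‖Â[(ÂᵀÂ)⁻¹ − (Â_pᵀÂ_p)⁻¹]Âᵀ‖ ≤ cond(Â)·‖I − Â⁺ÎÂ‖/(1 − ‖I − Â⁺ÎÂ‖)`
whenever `‖I − Â⁺ÎÂ‖ < 1`. -/
theorem lemma_bound_projected_inverse_difference
    (n m : ℕ) (A : Matrix (Fin n) (Fin m) ℝ) (Ihat : Matrix (Fin n) (Fin n) ℝ)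
    (hArank : A.rank = m) (hsym : Ihatᵀ = Ihat) (hidem : Ihat * Ihat = Ihat)
    (hinv : IsUnit (Aᵀ * Ihat * A)) :
    let Ap : Matrix (Fin m) (Fin n) ℝ := (Aᵀ * A)⁻¹ * Aᵀ
    let App : Matrix (Fin n) (Fin m) ℝ := Ihat * A
    ‖(1 : Matrix (Fin m) (Fin m) ℝ) - Ap * Ihat * A‖ < 1 →
      ‖A * ((Aᵀ * A)⁻¹ - (Appᵀ * App)⁻¹) * Aᵀ‖ ≤
        ‖A‖ * ‖Ap‖ * ‖(1 : Matrix (Fin m) (Fin m) ℝ) - Ap * Ihat * A‖ /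
          (1 - ‖(1 : Matrix (Fin m) (Fin m) ℝ) - Ap * Ihat * A‖) :=
  lemma_bound_projected_inverse_difference_general n m A Ihat hArank hsym hidem
end

section
/- Main error bound: Let Î be the orthogonal projector onto Span(Ĉ)+Span(D̂), Â of full column rank with Â_p = ÎÂ and ÂᵀÎÂ invertible. Assume ‖I − Â⁺ÎÂ‖₂ ≤ ρ < 1 and cond(Â) ≤ ω < ∞. Then with β₁ = (2−ρ)/(1−ρ) and β₂ = 1 + ω/(1−ρ), the reduced solution X̂*_min = (Î − Â_pÂ_p⁺)q̂ + (Â_p⁺)ᵀb̂ and exact solution X̂_min = (I − ÂÂ⁺)q̂ + (Â⁺)ᵀb̂ satisfy ‖X̂*_min − X̂_min‖ ≤ ‖Îq̂ − q̂‖ + (β₁‖b̂‖‖Â⁺‖₂² + β₂‖q̂‖‖Â⁺‖₂)·‖ÎÂ − Â‖₂. -/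
open Matrix
open scoped Matrix.Norms.L2Operator

/-! With `A⁺ = (ÂᵀÂ)⁻¹Âᵀ`, `E = ÎÂ − Â` and `M = A⁺ÎÂ = 1 + A⁺E`, the orthogonality of `Î` gives
`(ÎÂ)⁺ = M⁻¹A⁺Î`, and `‖1 − M‖ ≤ ρ < 1` gives `‖M⁻¹‖ ≤ 1/(1 − ρ)`. The error splits as
`(Î − 1)q̂ − ((ÎÂ)(ÎÂ)⁺ − ÂA⁺)q̂ + ((ÎÂ)⁺ − A⁺)ᵀb̂`, and both differences are linear in `E`:
`(ÎÂ)⁺ − A⁺ = A⁺A⁺ᵀEᵀ − M⁻¹(A⁺E)(A⁺Î)` and `(ÎÂ)(ÎÂ)⁺ − ÂA⁺ = A⁺ᵀEᵀ + (1 − ÂA⁺)E(ÎÂ)⁺`.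
Projectors have norm at most one, and `ω` enters through `‖A⁺‖ = ‖A⁺ÂA⁺‖ ≤ cond(Â)‖A⁺‖`. -/

lemma norm_le_of_mul_eq_one_of_norm_one_sub_le {R : Type*} [NormedRing R] (h1 : ‖(1 : R)‖ ≤ 1)
    {x y : R} {ρ : ℝ} (hyx : y * x = 1) (hx : ‖1 - x‖ ≤ ρ) (hρ : ρ < 1) :
    ‖y‖ ≤ (1 - ρ)⁻¹ := by
  have : ‖y‖ ≤ 1 + ‖y‖ * ρ := calc
    ‖y‖ = ‖1 + y * (1 - x)‖ := by rw [mul_sub, hyx, mul_one, add_sub_cancel]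
    _ ≤ ‖(1 : R)‖ + ‖y‖ * ‖1 - x‖ := norm_add_le_of_le le_rfl (norm_mul_le _ _)
    _ ≤ 1 + ‖y‖ * ρ := by gcongr
  rw [← one_div, le_div_iff₀ (by linarith)]
  linarith

variable {l m n k : Type*}

lemma Matrix.isSelfAdjoint_iff_transpose_eq {M : Matrix n n ℝ} : IsSelfAdjoint M ↔ Mᵀ = M := by
  rw [IsSelfAdjoint, star_eq_conjTranspose, conjTranspose_eq_transpose_of_trivial]

namespace IsStarProjection

variable [Fintype n] {P : Matrix n n ℝ}

lemma transpose_eq (hP : IsStarProjection P) : Pᵀ = P :=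
  isSelfAdjoint_iff_transpose_eq.mp hP.isSelfAdjoint

lemma transpose_mul_self (hP : IsStarProjection P) : Pᵀ * P = P := by
  rw [hP.transpose_eq, hP.isIdempotentElem.eq]

lemma transpose_mul_sub_one [DecidableEq n] (hP : IsStarProjection P) (A : Matrix n m ℝ) :
    Aᵀ * (P - 1) = (P * A - A)ᵀ := by
  rw [transpose_sub, transpose_mul, hP.transpose_eq, Matrix.mul_sub, Matrix.mul_one]

lemma l2_opNorm_mul_le [Fintype m] [DecidableEq n] [DecidableEq m] (hP : IsStarProjection P)
    (X : Matrix m n ℝ) : ‖X * P‖ ≤ ‖X‖ :=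
  (l2_opNorm_mul X P).trans <| mul_le_of_le_one_right (norm_nonneg X) (hP.norm_le P)

end IsStarProjection

namespace Matrix

variable [Fintype l] [Fintype m] [Fintype n] [Fintype k]

lemma l2_opNorm_transpose [DecidableEq m] [DecidableEq n] (M : Matrix m n ℝ) : ‖Mᵀ‖ = ‖M‖ := by
  rw [← conjTranspose_eq_transpose_of_trivial, l2_opNorm_conjTranspose]

lemma l2_opNorm_mul_mul_le_s14 [DecidableEq n] [DecidableEq l] [DecidableEq k] (X : Matrix m n ℝ)
    (Y : Matrix n l ℝ) (Z : Matrix l k ℝ) : ‖X * Y * Z‖ ≤ ‖X‖ * ‖Y‖ * ‖Z‖ :=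
  (l2_opNorm_mul _ _).trans <| by gcongr; exact l2_opNorm_mul _ _

/-- `(Bᵀ B)⁻¹ Bᵀ`, the Moore–Penrose pseudoinverse when `B` has full column rank. Otherwise
`Bᵀ B` is singular, its `⁻¹` is `0`, and so is `pinv B`. -/
noncomputable def pinv [DecidableEq n] (B : Matrix m n ℝ) : Matrix n m ℝ := (Bᵀ * B)⁻¹ * Bᵀ

section pinv

variable [DecidableEq n]

lemma transpose_pinv (B : Matrix m n ℝ) : (pinv B)ᵀ = B * (Bᵀ * B)⁻¹ := by
  rw [pinv, transpose_mul, transpose_nonsing_inv, transpose_mul, transpose_transpose]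

lemma mul_pinv_eq_transpose_pinv_mul (B : Matrix m n ℝ) : B * pinv B = (pinv B)ᵀ * Bᵀ := by
  rw [transpose_pinv, pinv, Matrix.mul_assoc]

lemma pinv_mul_self {B : Matrix m n ℝ} (hB : IsUnit (Bᵀ * B)) : pinv B * B = 1 := by
  rw [pinv, Matrix.mul_assoc, nonsing_inv_mul _ ((isUnit_iff_isUnit_det _).mp hB)]

lemma pinv_mul_transpose_pinv_mul_transpose {B : Matrix m n ℝ} (hB : IsUnit (Bᵀ * B)) :
    pinv B * (pinv B)ᵀ * Bᵀ = pinv B := by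
  rw [Matrix.mul_assoc, ← mul_pinv_eq_transpose_pinv_mul, ← Matrix.mul_assoc, pinv_mul_self hB,
    Matrix.one_mul]

lemma isStarProjection_mul_pinv (B : Matrix m n ℝ) : IsStarProjection (B * pinv B) where
  isIdempotentElem := by
    by_cases hB : IsUnit (Bᵀ * B)
    · rw [IsIdempotentElem, Matrix.mul_assoc, ← Matrix.mul_assoc (pinv B), pinv_mul_self hB,
        Matrix.one_mul]
    · rw [isUnit_iff_isUnit_det] at hB
      simp [IsIdempotentElem, pinv, nonsing_inv_apply_not_isUnit _ hB]
  isSelfAdjoint := by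
    rw [isSelfAdjoint_iff_transpose_eq, transpose_mul, mul_pinv_eq_transpose_pinv_mul]

end pinv

lemma pinv_isStarProjection_mul [DecidableEq k] {U : Matrix n n ℝ} (hU : IsStarProjection U)
    (D : Matrix n k ℝ) : pinv (U * D) = (Dᵀ * U * D)⁻¹ * Dᵀ * Uᵀ := by
  rw [pinv, transpose_mul, Matrix.mul_assoc Dᵀ, ← Matrix.mul_assoc Uᵀ, hU.transpose_mul_self]
  simp only [Matrix.mul_assoc]

lemma isStarProjection_one_sub_mul_pinv_add [DecidableEq n] [DecidableEq k] {R : Matrix n n ℝ}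
    (hR : IsStarProjection R) (D : Matrix n k ℝ) :
    IsStarProjection ((1 - R) * D * pinv ((1 - R) * D) + R) := by
  refine (isStarProjection_mul_pinv _).add hR ?_
  rw [pinv_isStarProjection_mul hR.one_sub, hR.one_sub.transpose_eq]
  simp only [Matrix.mul_assoc, hR.one_sub_mul_self, Matrix.mul_zero]

section Identities

variable [DecidableEq m] {A : Matrix n m ℝ} {P : Matrix n n ℝ}

lemma isUnit_transpose_mul_self_of_isUnit_transpose_mul_mul (h : IsUnit (Aᵀ * P * A)) :
    IsUnit (Aᵀ * A) := by
  have hinj : Function.Injective A.mulVec := by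
    refine Function.Injective.of_comp (f := (Aᵀ * P).mulVec) ?_
    simpa [Function.comp_def, mulVec_mulVec] using mulVec_injective_iff_isUnit.mpr h
  simpa [conjTranspose_eq_transpose_of_trivial] using (PosDef.conjTranspose_mul_self A hinj).isUnit

lemma pinv_mul_sub_one [DecidableEq n] (hA : IsUnit (Aᵀ * A)) (hP : IsStarProjection P) :
    pinv A * (P - 1) = pinv A * (pinv A)ᵀ * (P * A - A)ᵀ := by
  rw [← hP.transpose_mul_sub_one, ← Matrix.mul_assoc, pinv_mul_transpose_pinv_mul_transpose hA]

lemma mul_pinv_mul_sub_one [DecidableEq n] (hP : IsStarProjection P) :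
    A * pinv A * (P - 1) = (pinv A)ᵀ * (P * A - A)ᵀ := by
  rw [mul_pinv_eq_transpose_pinv_mul, Matrix.mul_assoc (pinv A)ᵀ, hP.transpose_mul_sub_one]

lemma pinv_mul_mul_sub_one (hA : IsUnit (Aᵀ * A)) :
    pinv A * P * A - 1 = pinv A * (P * A - A) := by
  rw [Matrix.mul_sub, pinv_mul_self hA, Matrix.mul_assoc]

lemma pinv_isStarProjection_mul_eq_inv_mul_pinv_mul (hA : IsUnit (Aᵀ * A))
    (hP : IsStarProjection P) : pinv (P * A) = (pinv A * P * A)⁻¹ * (pinv A * P) := by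
  have hfactor : (P * A)ᵀ * (P * A) = Aᵀ * A * (pinv A * P * A) := by
    rw [transpose_mul, Matrix.mul_assoc Aᵀ, ← Matrix.mul_assoc Pᵀ, hP.transpose_mul_self, pinv]
    simp only [Matrix.mul_assoc,
      mul_nonsing_inv_cancel_left _ _ ((isUnit_iff_isUnit_det _).mp hA)]
  rw [pinv, hfactor, mul_inv_rev, transpose_mul, hP.transpose_eq, pinv]
  simp only [Matrix.mul_assoc]

lemma pinv_isStarProjection_mul_sub_pinv [DecidableEq n] (hA : IsUnit (Aᵀ * A))
    (hP : IsStarProjection P) (hM : IsUnit (pinv A * P * A)) :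
    pinv (P * A) - pinv A =
      pinv A * (P - 1) - (pinv A * P * A)⁻¹ * (pinv A * (P * A - A)) * (pinv A * P) := by
  rw [← pinv_mul_mul_sub_one hA, Matrix.mul_sub (pinv A * P * A)⁻¹,
    nonsing_inv_mul _ ((isUnit_iff_isUnit_det _).mp hM), Matrix.mul_one,
    pinv_isStarProjection_mul_eq_inv_mul_pinv_mul hA hP]
  simp only [Matrix.mul_sub, Matrix.sub_mul, Matrix.mul_one, Matrix.one_mul]
  abel

lemma isStarProjection_mul_mul_pinv_sub_mul_pinv [DecidableEq n] (hA : IsUnit (Aᵀ * A))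
    (hP : IsStarProjection P) (hM : IsUnit (pinv A * P * A)) :
    P * A * pinv (P * A) - A * pinv A =
      A * pinv A * (P - 1) + (1 - A * pinv A) * (P * A - A) * pinv (P * A) := by
  have hMN : pinv A * P * A * pinv (P * A) = pinv A * P := by
    rw [pinv_isStarProjection_mul_eq_inv_mul_pinv_mul hA hP, ← Matrix.mul_assoc,
      mul_nonsing_inv _ ((isUnit_iff_isUnit_det _).mp hM), Matrix.one_mul]
  have hsplit : (1 - A * pinv A) * (P * A - A) * pinv (P * A) =
      (P * A - A) * pinv (P * A) - A * ((pinv A * P * A - 1) * pinv (P * A)) := by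
    rw [pinv_mul_mul_sub_one hA]
    simp only [Matrix.sub_mul, Matrix.one_mul, Matrix.mul_assoc]
  rw [hsplit, Matrix.sub_mul _ 1, hMN, Matrix.one_mul]
  simp only [Matrix.mul_sub, Matrix.sub_mul, Matrix.mul_one, Matrix.mul_assoc]
  abel

end Identities

section Bounds

variable [DecidableEq m] [DecidableEq n] {A : Matrix n m ℝ} {P : Matrix n n ℝ} {ρ ω : ℝ}

lemma l2_opNorm_inv_le {M : Matrix m m ℝ} (hM : IsUnit M) (hρ : ‖1 - M‖ ≤ ρ) (hρ1 : ρ < 1) :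
    ‖M⁻¹‖ ≤ (1 - ρ)⁻¹ :=
  norm_le_of_mul_eq_one_of_norm_one_sub_le ((IsStarProjection.one _).norm_le _)
    (nonsing_inv_mul _ ((isUnit_iff_isUnit_det _).mp hM)) hρ hρ1

lemma l2_opNorm_pinv_le (hA : IsUnit (Aᵀ * A)) : ‖pinv A‖ ≤ ‖A‖ * ‖pinv A‖ * ‖pinv A‖ :=
  calc ‖pinv A‖ = ‖pinv A * A * pinv A‖ := by rw [pinv_mul_self hA, Matrix.one_mul]
    _ ≤ ‖pinv A‖ * ‖A‖ * ‖pinv A‖ := l2_opNorm_mul_mul_le_s14 _ _ _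
    _ = ‖A‖ * ‖pinv A‖ * ‖pinv A‖ := by ring

lemma l2_opNorm_pinv_isStarProjection_mul_le (hA : IsUnit (Aᵀ * A)) (hP : IsStarProjection P)
    (hM : IsUnit (pinv A * P * A)) (hρ : ‖1 - pinv A * P * A‖ ≤ ρ) (hρ1 : ρ < 1) :
    ‖pinv (P * A)‖ ≤ (1 - ρ)⁻¹ * ‖pinv A‖ := by
  rw [pinv_isStarProjection_mul_eq_inv_mul_pinv_mul hA hP]
  refine (l2_opNorm_mul _ _).trans ?_
  gcongr
  exacts [l2_opNorm_inv_le hM hρ hρ1, hP.l2_opNorm_mul_le _]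

lemma l2_opNorm_pinv_isStarProjection_mul_sub_pinv_le (hA : IsUnit (Aᵀ * A))
    (hP : IsStarProjection P) (hM : IsUnit (pinv A * P * A)) (hρ : ‖1 - pinv A * P * A‖ ≤ ρ)
    (hρ1 : ρ < 1) :
    ‖pinv (P * A) - pinv A‖ ≤ (2 - ρ) / (1 - ρ) * ‖pinv A‖ ^ 2 * ‖P * A - A‖ := by
  have h₁ : ‖pinv A * (P - 1)‖ ≤ ‖pinv A‖ * ‖pinv A‖ * ‖P * A - A‖ := by
    rw [pinv_mul_sub_one hA hP]
    refine (l2_opNorm_mul_mul_le_s14 _ _ _).trans_eq ?_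
    rw [l2_opNorm_transpose, l2_opNorm_transpose]
  have h₂ : ‖(pinv A * P * A)⁻¹ * (pinv A * (P * A - A)) * (pinv A * P)‖ ≤
      (1 - ρ)⁻¹ * (‖pinv A‖ * ‖P * A - A‖) * ‖pinv A‖ := by
    refine (l2_opNorm_mul_mul_le_s14 _ _ _).trans ?_
    gcongr
    exacts [l2_opNorm_inv_le hM hρ hρ1, l2_opNorm_mul _ _, hP.l2_opNorm_mul_le _]
  have h1ρ : 1 - ρ ≠ 0 := (sub_pos.mpr hρ1).ne'
  rw [pinv_isStarProjection_mul_sub_pinv hA hP hM]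
  refine (norm_sub_le_of_le h₁ h₂).trans_eq ?_
  field_simp
  ring

lemma l2_opNorm_isStarProjection_mul_mul_pinv_sub_mul_pinv_le (hA : IsUnit (Aᵀ * A))
    (hP : IsStarProjection P) (hM : IsUnit (pinv A * P * A)) (hρ : ‖1 - pinv A * P * A‖ ≤ ρ)
    (hρ1 : ρ < 1) (hω : ‖A‖ * ‖pinv A‖ ≤ ω) :
    ‖P * A * pinv (P * A) - A * pinv A‖ ≤ (1 + ω / (1 - ρ)) * ‖pinv A‖ * ‖P * A - A‖ := by
  have h₁ : ‖A * pinv A * (P - 1)‖ ≤ ‖pinv A‖ * ‖P * A - A‖ := by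
    rw [mul_pinv_mul_sub_one hP, ← l2_opNorm_transpose (pinv A), ← l2_opNorm_transpose (P * A - A)]
    exact l2_opNorm_mul _ _
  have h₂ : ‖(1 - A * pinv A) * (P * A - A) * pinv (P * A)‖ ≤
      1 * ‖P * A - A‖ * ((1 - ρ)⁻¹ * ‖pinv A‖) := by
    refine (l2_opNorm_mul_mul_le_s14 _ _ _).trans ?_
    gcongr
    exacts [(isStarProjection_mul_pinv A).one_sub.norm_le _,
      l2_opNorm_pinv_isStarProjection_mul_le hA hP hM hρ hρ1]
  have hcond : ‖pinv A‖ ≤ ω * ‖pinv A‖ := (l2_opNorm_pinv_le hA).trans (by gcongr)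
  rw [isStarProjection_mul_mul_pinv_sub_mul_pinv hA hP hM]
  calc _ ≤ ‖pinv A‖ * ‖P * A - A‖ + 1 * ‖P * A - A‖ * ((1 - ρ)⁻¹ * ‖pinv A‖) :=
        norm_add_le_of_le h₁ h₂
    _ ≤ ‖pinv A‖ * ‖P * A - A‖ + 1 * ‖P * A - A‖ * ((1 - ρ)⁻¹ * (ω * ‖pinv A‖)) := by gcongr
    _ = (1 + ω / (1 - ρ)) * ‖pinv A‖ * ‖P * A - A‖ := by ring

theorem l2_opNorm_reduced_sub_exact_le [DecidableEq l]
    (hP : IsStarProjection P) (hPA : IsUnit (Aᵀ * P * A)) (hρ : ‖1 - pinv A * P * A‖ ≤ ρ)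
    (hρ1 : ρ < 1) (hω : ‖A‖ * ‖pinv A‖ ≤ ω) (q : Matrix n l ℝ) (b : Matrix m l ℝ) :
    ‖((P - P * A * pinv (P * A)) * q + (pinv (P * A))ᵀ * b) -
        ((1 - A * pinv A) * q + (pinv A)ᵀ * b)‖ ≤
      ‖P * q - q‖ + ((2 - ρ) / (1 - ρ) * ‖b‖ * ‖pinv A‖ ^ 2 +
        (1 + ω / (1 - ρ)) * ‖q‖ * ‖pinv A‖) * ‖P * A - A‖ := by
  have hA := isUnit_transpose_mul_self_of_isUnit_transpose_mul_mul hPA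
  have hM : IsUnit (pinv A * P * A) := by
    have : pinv A * P * A = (Aᵀ * A)⁻¹ * (Aᵀ * P * A) := by simp only [pinv, Matrix.mul_assoc]
    exact this ▸ (isUnit_nonsing_inv_iff.mpr hA).mul hPA
  have hsplit : (P - P * A * pinv (P * A)) * q + (pinv (P * A))ᵀ * b -
        ((1 - A * pinv A) * q + (pinv A)ᵀ * b) =
      (P * q - q) - (P * A * pinv (P * A) - A * pinv A) * q + (pinv (P * A) - pinv A)ᵀ * b := by
    simp only [Matrix.sub_mul, transpose_sub, Matrix.one_mul]
    abel
  rw [hsplit]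
  calc _ ≤ ‖P * q - q‖ + ‖P * A * pinv (P * A) - A * pinv A‖ * ‖q‖ +
        ‖pinv (P * A) - pinv A‖ * ‖b‖ := by
        refine norm_add_le_of_le (norm_sub_le_of_le le_rfl (l2_opNorm_mul _ _)) ?_
        exact (l2_opNorm_mul _ _).trans_eq (by rw [l2_opNorm_transpose])
    _ ≤ ‖P * q - q‖ + (1 + ω / (1 - ρ)) * ‖pinv A‖ * ‖P * A - A‖ * ‖q‖ +
        (2 - ρ) / (1 - ρ) * ‖pinv A‖ ^ 2 * ‖P * A - A‖ * ‖b‖ := by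
        gcongr
        exacts [l2_opNorm_isStarProjection_mul_mul_pinv_sub_mul_pinv_le hA hP hM hρ hρ1 hω,
          l2_opNorm_pinv_isStarProjection_mul_sub_pinv_le hA hP hM hρ hρ1]
    _ = _ := by ring

end Bounds

end Matrix

/-- The vectors `q̂` and `b̂` are column matrices, whose L2 operator norm is the Euclidean norm. -/
theorem main_error_bound_general
    (n d k m : ℕ) (C : Matrix (Fin n) (Fin d) ℝ) (D : Matrix (Fin n) (Fin k) ℝ)
    (A : Matrix (Fin n) (Fin m) ℝ)
    (q : Matrix (Fin n) (Fin 1) ℝ) (b : Matrix (Fin m) (Fin 1) ℝ)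
    (ρ ω : ℝ) :
    let Cp : Matrix (Fin d) (Fin n) ℝ := (Cᵀ * C)⁻¹ * Cᵀ
    let U : Matrix (Fin n) (Fin n) ℝ := 1 - C * Cp
    let UDp : Matrix (Fin k) (Fin n) ℝ := (Dᵀ * U * D)⁻¹ * Dᵀ * Uᵀ
    let Ihat : Matrix (Fin n) (Fin n) ℝ := U * D * UDp + C * Cp
    let Ap : Matrix (Fin m) (Fin n) ℝ := (Aᵀ * A)⁻¹ * Aᵀ
    let App : Matrix (Fin n) (Fin m) ℝ := Ihat * A
    let Appp : Matrix (Fin m) (Fin n) ℝ := (Appᵀ * App)⁻¹ * Appᵀ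
    let Xred : Matrix (Fin n) (Fin 1) ℝ := (Ihat - App * Appp) * q + Apppᵀ * b
    let Xexact : Matrix (Fin n) (Fin 1) ℝ := (1 - A * Ap) * q + Apᵀ * b
    IsUnit (Aᵀ * Ihat * A) →
    ‖(1 : Matrix (Fin m) (Fin m) ℝ) - Ap * Ihat * A‖ ≤ ρ → ρ < 1 →
    ‖A‖ * ‖Ap‖ ≤ ω →
      ‖Xred - Xexact‖ ≤
        ‖Ihat * q - q‖ +
          ((2 - ρ) / (1 - ρ) * ‖b‖ * ‖Ap‖ ^ 2 +
            (1 + ω / (1 - ρ)) * ‖q‖ * ‖Ap‖) * ‖Ihat * A - A‖ := by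
  intro Cp U UDp Ihat Ap App Appp Xred Xexact hPA hρ hρ1 hω
  have hR := isStarProjection_mul_pinv C
  have hP : IsStarProjection Ihat := by
    have := isStarProjection_one_sub_mul_pinv_add hR D
    rwa [pinv_isStarProjection_mul hR.one_sub] at this
  exact l2_opNorm_reduced_sub_exact_le hP hPA hρ hρ1 hω q b

/-- Main approximation error bound for the variational
subspace solution. Vectors `q̂`, `b̂` are represented as column matrices
(whose L2 operator norm is the Euclidean norm). -/
theorem main_error_bound
    (n d k m : ℕ) (C : Matrix (Fin n) (Fin d) ℝ) (D : Matrix (Fin n) (Fin k) ℝ)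
    (A : Matrix (Fin n) (Fin m) ℝ)
    (q : Matrix (Fin n) (Fin 1) ℝ) (b : Matrix (Fin m) (Fin 1) ℝ)
    (ρ ω : ℝ)
    (hrank : (Matrix.fromCols C D).rank = d + k)
    (hArank : A.rank = m) :
    let Cp : Matrix (Fin d) (Fin n) ℝ := (Cᵀ * C)⁻¹ * Cᵀ
    let U : Matrix (Fin n) (Fin n) ℝ := 1 - C * Cp
    let UDp : Matrix (Fin k) (Fin n) ℝ := (Dᵀ * U * D)⁻¹ * Dᵀ * Uᵀ
    let Ihat : Matrix (Fin n) (Fin n) ℝ := U * D * UDp + C * Cp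
    let Ap : Matrix (Fin m) (Fin n) ℝ := (Aᵀ * A)⁻¹ * Aᵀ
    let App : Matrix (Fin n) (Fin m) ℝ := Ihat * A
    let Appp : Matrix (Fin m) (Fin n) ℝ := (Appᵀ * App)⁻¹ * Appᵀ
    let Xred : Matrix (Fin n) (Fin 1) ℝ := (Ihat - App * Appp) * q + Apppᵀ * b
    let Xexact : Matrix (Fin n) (Fin 1) ℝ := (1 - A * Ap) * q + Apᵀ * b
    IsUnit (Aᵀ * Ihat * A) →
    ‖(1 : Matrix (Fin m) (Fin m) ℝ) - Ap * Ihat * A‖ ≤ ρ → ρ < 1 →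
    ‖A‖ * ‖Ap‖ ≤ ω →
      ‖Xred - Xexact‖ ≤
        ‖Ihat * q - q‖ +
          ((2 - ρ) / (1 - ρ) * ‖b‖ * ‖Ap‖ ^ 2 +
            (1 + ω / (1 - ρ)) * ‖q‖ * ‖Ap‖) * ‖Ihat * A - A‖ :=
  main_error_bound_general n d k m C D A q b ρ ω
end

section
/- Quotient-equivalence reduction: Suppose X_min is the unique minimizer of f(X) = (1/2)XᵀLᵀLX − qᵀX subject to AᵀX = b, with decomposition X_min = X̃_min + X̄_min where X̃_min = L⁺LX_min and X̄_min = (I − L⁺L)X_min. Let X̃°_min be the unique minimizer of f̃(X̃) = (1/2)X̃ᵀLᵀLX̃ − qᵀX̃ − qᵀX̄_min subject to AᵀX̃ = b − AᵀX̄_min and (I − L⁺L)X̃ = 0. Then X̃°_min = L⁺LX_min. -/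
open Matrix

/-- Quotient-equivalence reduction. If `X_min` uniquely
minimizes `(1/2)XᵀLᵀLX − qᵀX` subject to `AᵀX = b`, and `X̃°_min` uniquely
minimizes the companion problem, then `X̃°_min = L⁺LX_min`. `Lp` is the
Moore–Penrose pseudo-inverse of `L`. -/
theorem quotient_equivalence_reduction
    (n m : ℕ) (L Lp : Matrix (Fin n) (Fin n) ℝ)
    (h1 : L * Lp * L = L) (h2 : Lp * L * Lp = Lp)
    (h3 : (L * Lp)ᵀ = L * Lp) (h4 : (Lp * L)ᵀ = Lp * L)
    (A : Matrix (Fin n) (Fin m) ℝ) (q : Fin n → ℝ) (b : Fin m → ℝ)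
    (Xmin Xo : Fin n → ℝ) :
    let f : (Fin n → ℝ) → ℝ :=
      fun X => (1 / 2) * (X ⬝ᵥ ((Lᵀ * L) *ᵥ X)) - q ⬝ᵥ X
    let Xbar : Fin n → ℝ := (1 - Lp * L) *ᵥ Xmin
    let g : (Fin n → ℝ) → ℝ :=
      fun X => (1 / 2) * (X ⬝ᵥ ((Lᵀ * L) *ᵥ X)) - q ⬝ᵥ X - q ⬝ᵥ Xbar
    (Aᵀ *ᵥ Xmin = b ∧
        ∀ X : Fin n → ℝ, Aᵀ *ᵥ X = b → X ≠ Xmin → f Xmin < f X) →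
    ((Aᵀ *ᵥ Xo = b - Aᵀ *ᵥ Xbar ∧ (1 - Lp * L) *ᵥ Xo = 0) ∧
        ∀ X : Fin n → ℝ, Aᵀ *ᵥ X = b - Aᵀ *ᵥ Xbar →
          (1 - Lp * L) *ᵥ X = 0 → X ≠ Xo → g Xo < g X) →
    Xo = (Lp * L) *ᵥ Xmin := by
  intro f Xbar g hmin hcomp
  obtain ⟨hfeas, huniq⟩ := hmin
  obtain ⟨⟨hA, hK⟩, guniq⟩ := hcomp
  set Xt : Fin n → ℝ := (Lp * L) *ᵥ Xmin with hXt
  -- L applied to Xbar vanishes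
  have hLbar : L *ᵥ Xbar = 0 := by
    show L *ᵥ ((1 - Lp * L) *ᵥ Xmin) = 0
    rw [mulVec_mulVec]
    have : L * (1 - Lp * L) = 0 := by
      rw [Matrix.mul_sub, Matrix.mul_one, ← Matrix.mul_assoc, h1, sub_self]
    rw [this, zero_mulVec]
  -- Xt + Xbar = Xmin
  have hsum : Xt + Xbar = Xmin := by
    show (Lp * L) *ᵥ Xmin + (1 - Lp * L) *ᵥ Xmin = Xmin
    rw [← add_mulVec]
    simp
  -- quadratic form rewrite
  have hquad : ∀ X : Fin n → ℝ, X ⬝ᵥ ((Lᵀ * L) *ᵥ X) = (L *ᵥ X) ⬝ᵥ (L *ᵥ X) := by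
    intro X
    rw [← mulVec_mulVec, dotProduct_mulVec, vecMul_transpose]
  -- f(X + Xbar) = g X for any X
  have hfg : ∀ X : Fin n → ℝ, f (X + Xbar) = g X := by
    intro X
    show (1 / 2) * ((X + Xbar) ⬝ᵥ ((Lᵀ * L) *ᵥ (X + Xbar))) - q ⬝ᵥ (X + Xbar)
      = (1 / 2) * (X ⬝ᵥ ((Lᵀ * L) *ᵥ X)) - q ⬝ᵥ X - q ⬝ᵥ Xbar
    rw [hquad, hquad, mulVec_add, hLbar, add_zero, dotProduct_add]
    ring
  -- Xt is feasible for companion problem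
  have hAt : Aᵀ *ᵥ Xt = b - Aᵀ *ᵥ Xbar := by
    have : Aᵀ *ᵥ Xt + Aᵀ *ᵥ Xbar = b := by
      rw [← mulVec_add, hsum, hfeas]
    exact eq_sub_of_add_eq this
  have hKt : (1 - Lp * L) *ᵥ Xt = 0 := by
    show (1 - Lp * L) *ᵥ ((Lp * L) *ᵥ Xmin) = 0
    rw [mulVec_mulVec]
    have : (1 - Lp * L) * (Lp * L) = 0 := by
      have h2' : Lp * L * Lp * L = Lp * L := by
        rw [h2]
      rw [Matrix.sub_mul, Matrix.one_mul, ← Matrix.mul_assoc, h2', sub_self]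
    rw [this, zero_mulVec]
  by_contra hne
  -- g Xo < g Xt = f Xmin
  have hlt : g Xo < g Xt := guniq Xt hAt hKt (fun h => hne (h ▸ rfl))
  have hgt : g Xt = f Xmin := by rw [← hfg Xt, hsum]
  -- Xo + Xbar feasible for original
  have hAX' : Aᵀ *ᵥ (Xo + Xbar) = b := by
    rw [mulVec_add, hA]
    abel
  rcases eq_or_ne (Xo + Xbar) Xmin with he | hne'
  · apply hne
    have : Xo = Xmin - Xbar := by rw [← he]; abel
    rw [this, ← hsum]
    abel
  · have : f Xmin < f (Xo + Xbar) := huniq _ hAX' hne'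
    rw [hfg Xo] at this
    linarith [hlt, hgt ▸ this]
end
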